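/- Let X be a Tychonoff space. For every open set U ⊆ βX, the set {μ ∈ R_min(X) : S(μ) ⊆ U} is open in R_min(X) with the topology of pointwise convergence; that is, the set-valued support map μ ↦ S(μ) on R_min(X) is upper semicontinuous. -/

import Mathlib

open Set

/-- The Čech–Stone extension `βf : βX → ℝ` of a bounded continuous function `f : X → ℝ`
(obtained by extending `f`, viewed as a map into the compact interval `[-‖f‖, ‖f‖]`,
over the Stone–Čech compactification). -/
noncomputable def betaExt {X : Type*} [TopologicalSpace X] (f : BoundedContinuousFunction X ℝ) :
    StoneCech X → ℝ :=
  Subtype.val ∘ stoneCechExtend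
    (Continuous.subtype_mk f.continuous
      (fun x => Set.mem_Icc.mpr (abs_le.mp (Real.norm_eq_abs (f x) ▸ f.norm_coe_le_norm x)))
      : Continuous fun x => (⟨f x, _⟩ : Set.Icc (-‖f‖) ‖f‖))

variable {X : Type*} [TopologicalSpace X]

/-- `μ` is *normed*: `μ 1 = 1`. -/
def BNormed (μ : BoundedContinuousFunction X ℝ → ℝ) : Prop := μ 1 = 1

/-- `μ` is *weakly additive*: `μ (f + c·1) = μ f + c`. -/
def BWeaklyAdditive (μ : BoundedContinuousFunction X ℝ → ℝ) : Prop :=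
  ∀ (f : BoundedContinuousFunction X ℝ) (c : ℝ),
    μ (f + BoundedContinuousFunction.const X c) = μ f + c

/-- `μ` *preserves min*. -/
def BPreservesMin (μ : BoundedContinuousFunction X ℝ → ℝ) : Prop :=
  ∀ f g : BoundedContinuousFunction X ℝ, μ (f ⊓ g) = min (μ f) (μ g)

/-- `μ` *preserves max*. -/
def BPreservesMax (μ : BoundedContinuousFunction X ℝ → ℝ) : Prop :=
  ∀ f g : BoundedContinuousFunction X ℝ, μ (f ⊔ g) = max (μ f) (μ g)

/-- `μ` *weakly preserves min*: `μ (min{f, c·1}) = min{μ f, c}`. -/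
def BWeaklyPreservesMin (μ : BoundedContinuousFunction X ℝ → ℝ) : Prop :=
  ∀ (f : BoundedContinuousFunction X ℝ) (c : ℝ),
    μ (f ⊓ BoundedContinuousFunction.const X c) = min (μ f) c

/-- `μ` *weakly preserves max*: `μ (max{f, c·1}) = max{μ f, c}`. -/
def BWeaklyPreservesMax (μ : BoundedContinuousFunction X ℝ → ℝ) : Prop :=
  ∀ (f : BoundedContinuousFunction X ℝ) (c : ℝ),
    μ (f ⊔ BoundedContinuousFunction.const X c) = max (μ f) c

/-- The support `S(μ) ⊆ βX` of a functional `μ` on `C*(X)`: points `p ∈ βX` such that every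
open neighbourhood `O` of `p` admits `f, g ∈ C*(X)` with `βf = βg` off `O` and `μ f ≠ μ g`. -/
def betaSupport (μ : BoundedContinuousFunction X ℝ → ℝ) : Set (StoneCech X) :=
  {p | ∀ O : Set (StoneCech X), IsOpen O → p ∈ O →
    ∃ f g : BoundedContinuousFunction X ℝ,
      (∀ q ∉ O, betaExt f q = betaExt g q) ∧ μ f ≠ μ g}

/-- `R_min(X)`: normed, weakly additive functionals preserving min and weakly preserving max. -/
def RMin (X : Type*) [TopologicalSpace X] : Set (BoundedContinuousFunction X ℝ → ℝ) :=
  {μ | BNormed μ ∧ BWeaklyAdditive μ ∧ BPreservesMin μ ∧ BWeaklyPreservesMax μ}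

/-- `R_max(X)`: normed, weakly additive functionals preserving max and weakly preserving min. -/
def RMax (X : Type*) [TopologicalSpace X] : Set (BoundedContinuousFunction X ℝ → ℝ) :=
  {μ | BNormed μ ∧ BWeaklyAdditive μ ∧ BPreservesMax μ ∧ BWeaklyPreservesMin μ}

/-- `R_min(X)_c`: members of `R_min(X)` with compact support, i.e. `∅ ≠ S(μ) ⊆ η(X)`. -/
def RMinC (X : Type*) [TopologicalSpace X] : Set (BoundedContinuousFunction X ℝ → ℝ) :=
  {μ | μ ∈ RMin X ∧ (betaSupport μ).Nonempty ∧
    betaSupport μ ⊆ Set.range (stoneCechUnit : X → StoneCech X)}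

/-- `R_max(X)_c`: members of `R_max(X)` with compact support, i.e. `∅ ≠ S(μ) ⊆ η(X)`. -/
def RMaxC (X : Type*) [TopologicalSpace X] : Set (BoundedContinuousFunction X ℝ → ℝ) :=
  {μ | μ ∈ RMax X ∧ (betaSupport μ).Nonempty ∧
    betaSupport μ ⊆ Set.range (stoneCechUnit : X → StoneCech X)}

/-!
Fix `μ ∈ R_min(X)` with `S(μ) ⊆ U`. Each point `p` of the compact set `βX ∖ U` lies outside
`S(μ)`, so Urysohn's lemma on `βX` gives a test function `k` with `βk = 0` near `p` and
`μ k = 1`; finitely many of these neighbourhoods cover `βX ∖ U`, and `ν (k_i) > 0` for all of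
them is a basic open condition on `ν`. It forces `S(ν) ⊆ U`: if `βk = 0` on `V` and
`ν k > 0`, the doubling inequality `2 ν h ≤ ν (h + h)` makes `ν (2 ^ m • k)` arbitrarily
large, and cutting `f` and `g` that agree off `V` at `2 ^ m • k - M` (with `M` a bound for
both) changes neither value of `ν` but makes the two functions equal.
-/

open BoundedContinuousFunction

section StoneCechExtension

theorem betaExt_stoneCechUnit (f : X →ᵇ ℝ) (x : X) : betaExt f (stoneCechUnit x) = f x :=
  congrArg Subtype.val (congrFun (stoneCechExtend_extends _) x)

theorem continuous_betaExt (f : X →ᵇ ℝ) : Continuous (betaExt f) :=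
  continuous_subtype_val.comp (continuous_stoneCechExtend _)

theorem betaExt_eq_of_comp_eq {f : X →ᵇ ℝ} {G : StoneCech X → ℝ} (hG : Continuous G)
    (h : G ∘ stoneCechUnit = f) : betaExt f = G :=
  stoneCech_hom_ext (continuous_betaExt f) hG <| by
    ext x
    simp [betaExt_stoneCechUnit, ← h]

theorem betaExt_one : betaExt (1 : X →ᵇ ℝ) = 1 :=
  betaExt_eq_of_comp_eq continuous_const rfl

theorem exists_betaExt_eq (G : C(StoneCech X, ℝ)) : ∃ k : X →ᵇ ℝ, betaExt k = G :=
  ⟨(mkOfCompact G).compContinuous ⟨stoneCechUnit, continuous_stoneCechUnit⟩,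
    betaExt_eq_of_comp_eq G.continuous rfl⟩

end StoneCechExtension

section Functional

variable {μ : (X →ᵇ ℝ) → ℝ}

theorem BPreservesMin.monotone (hmin : BPreservesMin μ) : Monotone μ := fun f g hfg => by
  have h := hmin f g
  rw [inf_eq_left.mpr hfg] at h
  exact h.le.trans (min_le_right _ _)

theorem BWeaklyAdditive.apply_const (hadd : BWeaklyAdditive μ) (hnorm : BNormed μ) (c : ℝ) :
    μ (const X c) = c := by
  have h : (1 : X →ᵇ ℝ) + const X (c - 1) = const X c := by ext; simp
  rw [← h, hadd, hnorm]
  ring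

theorem BWeaklyAdditive.apply_le_norm (hadd : BWeaklyAdditive μ) (hnorm : BNormed μ)
    (hmin : BPreservesMin μ) (f : X →ᵇ ℝ) : μ f ≤ ‖f‖ :=
  (hmin.monotone fun x => f.apply_le_norm x).trans_eq (hadd.apply_const hnorm _)

theorem BWeaklyAdditive.two_mul_le_apply_add_self (hadd : BWeaklyAdditive μ)
    (hmin : BPreservesMin μ) (hmax : BWeaklyPreservesMax μ) (h : X →ᵇ ℝ) :
    2 * μ h ≤ μ (h + h) := by
  set a := μ (h + h)
  have hle : h + const X (-(a / 2)) ≤ (h + h + const X (-a)) ⊔ const X 0 := fun x => by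
    change h x + -(a / 2) ≤ max (h x + h x + -a) 0
    linarith [le_max_left (h x + h x + -a) 0, le_max_right (h x + h x + -a) 0]
  have := hmin.monotone hle
  rw [hadd, hmax, hadd, add_neg_cancel, max_self] at this
  linarith

theorem BWeaklyAdditive.two_pow_mul_le_apply_smul (hadd : BWeaklyAdditive μ)
    (hmin : BPreservesMin μ) (hmax : BWeaklyPreservesMax μ) (h : X →ᵇ ℝ) (m : ℕ) :
    2 ^ m * μ h ≤ μ ((2 : ℝ) ^ m • h) := by
  induction m with
  | zero => simp
  | succ m ih =>
    calc 2 ^ (m + 1) * μ h = 2 * (2 ^ m * μ h) := by ring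
      _ ≤ 2 * μ ((2 : ℝ) ^ m • h) := by gcongr
      _ ≤ μ ((2 : ℝ) ^ m • h + (2 : ℝ) ^ m • h) :=
        hadd.two_mul_le_apply_add_self hmin hmax _
      _ = μ ((2 : ℝ) ^ (m + 1) • h) := by rw [pow_succ', mul_smul, two_smul]

theorem apply_eq_of_eqOn_compl (hnorm : BNormed μ) (hadd : BWeaklyAdditive μ)
    (hmin : BPreservesMin μ) (hmax : BWeaklyPreservesMax μ) {V : Set (StoneCech X)}
    {k : X →ᵇ ℝ} (hkV : EqOn (betaExt k) 0 V) (hk : 0 < μ k) {f g : X →ᵇ ℝ}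
    (hfg : EqOn (betaExt f) (betaExt g) Vᶜ) : μ f = μ g := by
  set M := max ‖f‖ ‖g‖
  obtain ⟨m, hm⟩ : ∃ m : ℕ, 2 * M < 2 ^ m * μ k := by
    obtain ⟨m, hm⟩ := pow_unbounded_of_one_lt (2 * M / μ k) one_lt_two
    exact ⟨m, (div_lt_iff₀ hk).mp hm⟩
  set w := (2 : ℝ) ^ m • k + const X (-M)
  have hMw : M < μ w := by
    rw [hadd]
    linarith [hadd.two_pow_mul_le_apply_smul hmin hmax k m]
  have hcut : f ⊓ w = g ⊓ w := by
    ext x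
    by_cases hx : stoneCechUnit x ∈ V
    · have hkx : k x = 0 := by rw [← betaExt_stoneCechUnit]; exact hkV hx
      have hfx : -M ≤ f x := (le_max_left _ _ |> neg_le_neg).trans (f.neg_norm_le_apply x)
      have hgx : -M ≤ g x := (le_max_right _ _ |> neg_le_neg).trans (g.neg_norm_le_apply x)
      simp [w, hkx, hfx, hgx]
    · have hfgx := hfg hx
      rw [betaExt_stoneCechUnit, betaExt_stoneCechUnit] at hfgx
      simp [hfgx]
  have hfM : μ f ≤ M := (hadd.apply_le_norm hnorm hmin f).trans (le_max_left _ _)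
  have hgM : μ g ≤ M := (hadd.apply_le_norm hnorm hmin g).trans (le_max_right _ _)
  have := congrArg μ hcut
  rwa [hmin, hmin, min_eq_left (by linarith), min_eq_left (by linarith)] at this

theorem disjoint_betaSupport_of_eqOn_zero (hnorm : BNormed μ) (hadd : BWeaklyAdditive μ)
    (hmin : BPreservesMin μ) (hmax : BWeaklyPreservesMax μ) {V : Set (StoneCech X)}
    (hV : IsOpen V) {k : X →ᵇ ℝ} (hkV : EqOn (betaExt k) 0 V) (hk : 0 < μ k) :
    Disjoint (betaSupport μ) V := by
  refine disjoint_left.mpr fun p hp hpV => ?_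
  obtain ⟨f, g, hfg, hne⟩ := hp V hV hpV
  exact hne (apply_eq_of_eqOn_compl hnorm hadd hmin hmax hkV hk hfg)

theorem exists_isOpen_eqOn_zero_of_notMem_betaSupport (hnorm : BNormed μ) {p : StoneCech X}
    (hp : p ∉ betaSupport μ) :
    ∃ V, IsOpen V ∧ p ∈ V ∧ ∃ k : X →ᵇ ℝ, EqOn (betaExt k) 0 V ∧ μ k = 1 := by
  simp only [betaSupport, mem_ofPred_eq, not_forall, not_exists, not_and, not_not] at hp
  obtain ⟨O, hO, hpO, hconst⟩ := hp
  obtain ⟨t, ht, htc, htO⟩ := exists_mem_nhds_isClosed_subset (hO.mem_nhds hpO)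
  obtain ⟨G, hG0, hG1, -⟩ := exists_continuous_zero_one_of_isClosed htc hO.isClosed_compl
    (disjoint_compl_right_iff_subset.mpr htO)
  obtain ⟨k, hk⟩ := exists_betaExt_eq G
  refine ⟨interior t, isOpen_interior, mem_interior_iff_mem_nhds.mpr ht, k, ?_, ?_⟩
  · rw [hk]
    exact hG0.mono interior_subset
  · rw [hconst k 1 fun q hq => by rw [hk, betaExt_one]; exact hG1 hq, hnorm]

end Functional

theorem statement12_general (X : Type*) [TopologicalSpace X] :
    ∀ U : Set (StoneCech X), IsOpen U →
      IsOpen {ν : RMin X | betaSupport (ν : BoundedContinuousFunction X ℝ → ℝ) ⊆ U} := by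
  intro U hU
  refine isOpen_iff_forall_mem_open.mpr fun μ hμU => ?_
  have hsep (p : ↥Uᶜ) : ∃ V, IsOpen V ∧ p.1 ∈ V ∧
      ∃ k : X →ᵇ ℝ, EqOn (betaExt k) 0 V ∧ μ.1 k = 1 :=
    exists_isOpen_eqOn_zero_of_notMem_betaSupport μ.2.1 fun hp => p.2 (hμU hp)
  choose V hV hpV k hkV hμk using hsep
  obtain ⟨t, ht⟩ := hU.isClosed_compl.isCompact.elim_finite_subcover V hV
    fun p hp => mem_iUnion.mpr ⟨⟨p, hp⟩, hpV _⟩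
  refine ⟨{ν | ∀ i ∈ t, 0 < ν.1 (k i)}, fun ν hν r hr => ?_, ?_, fun i _ => by simp [hμk i]⟩
  · by_contra hrU
    obtain ⟨i, hi, hrV⟩ := mem_iUnion₂.mp (ht hrU)
    obtain ⟨hnorm, hadd, hmin, hmax⟩ := ν.2
    exact disjoint_left.mp (disjoint_betaSupport_of_eqOn_zero hnorm hadd hmin hmax (hV i)
      (hkV i) (hν i hi)) hr hrV
  · simp only [ofPred_forall]
    exact isOpen_biInter_finset fun i _ =>
      isOpen_lt continuous_const ((continuous_apply _).comp continuous_subtype_val)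

/-- the support map on `R_min(X)` is upper semicontinuous: for each open
`U ⊆ βX`, the set `{μ ∈ R_min(X) : S(μ) ⊆ U}` is open in `R_min(X)` (with the subspace
topology inherited from the product topology of pointwise convergence). -/
theorem statement12 (X : Type*) [TopologicalSpace X] [T35Space X] :
    ∀ U : Set (StoneCech X), IsOpen U →
      IsOpen {ν : RMin X | betaSupport (ν : BoundedContinuousFunction X ℝ → ℝ) ⊆ U} :=
  statement12_general X
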